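/- Let α ∈ ℝ with α ≠ 0, and let f = (f₁,f₂) : ℝ² → ℝ² be a C² vector field compactly supported in 𝔻. Then L_α f(x) = 0 for all x ∈ ℝ² if and only if there exists a C³ scalar function φ : ℝ² → ℝ such that f₁ = ∂̃₁φ and f₂ = ∂̃₂φ, where ∂̃₁ = −(1+α)u₁u₂∂₁ + (1−α)u₂²∂₂ and ∂̃₂ = (1−α)u₁²∂₁ − (1+α)u₁u₂∂₂. -/

import Mathlib

open MeasureTheory

noncomputable section

/-- Euclidean dot product on `ℝ × ℝ`. -/
def dot (a b : ℝ × ℝ) : ℝ := a.1 * b.1 + a.2 * b.2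

/-- Rotation by `π/2`: `w⊥ = (−w₂, w₁)`. -/
def perp (w : ℝ × ℝ) : ℝ × ℝ := (-w.2, w.1)

/-- The open unit disc in `ℝ²`. -/
def disc : Set (ℝ × ℝ) := {p : ℝ × ℝ | p.1 ^ 2 + p.2 ^ 2 < 1}

/-- Directional derivative along a constant vector `w`. -/
def Dc (w : ℝ × ℝ) (F : ℝ × ℝ → ℝ) (x : ℝ × ℝ) : ℝ := fderiv ℝ F x w

/-- The tilde partial derivative `∂̃₁ = −(1+α)u₁u₂∂₁ + (1−α)u₂²∂₂`. -/
def pt1 (α u₁ u₂ : ℝ) (g : ℝ × ℝ → ℝ) (x : ℝ × ℝ) : ℝ :=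
  -(1 + α) * u₁ * u₂ * fderiv ℝ g x (1, 0) + (1 - α) * u₂ ^ 2 * fderiv ℝ g x (0, 1)

/-- The tilde partial derivative `∂̃₂ = (1−α)u₁²∂₁ − (1+α)u₁u₂∂₂`. -/
def pt2 (α u₁ u₂ : ℝ) (g : ℝ × ℝ → ℝ) (x : ℝ × ℝ) : ℝ :=
  (1 - α) * u₁ ^ 2 * fderiv ℝ g x (1, 0) - (1 + α) * u₁ * u₂ * fderiv ℝ g x (0, 1)

/-- Longitudinal V-line transform with weight `α` and constant branch directions. -/
def Lc (α : ℝ) (u v : ℝ × ℝ) (f : ℝ × ℝ → ℝ × ℝ) (x : ℝ × ℝ) : ℝ :=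
  (- ∫ t in Set.Ioi (0 : ℝ), dot u (f (x + t • u))) +
    α * ∫ t in Set.Ioi (0 : ℝ), dot v (f (x + t • v))

/-- Transverse V-line transform with weight `α` and constant branch directions. -/
def Tc (α : ℝ) (u v : ℝ × ℝ) (f : ℝ × ℝ → ℝ × ℝ) (x : ℝ × ℝ) : ℝ :=
  (- ∫ t in Set.Ioi (0 : ℝ), dot (perp u) (f (x + t • u))) +
    α * ∫ t in Set.Ioi (0 : ℝ), dot (perp v) (f (x + t • v))

/-!
Write `A_w x = ∫₀^∞ w · f (x + t w) dt`, so that `L_α f = -A_u + α A_v` and `∂_w A_w = -w · f`.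
The equations `f = (∂̃₁φ, ∂̃₂φ)` are equivalent to `u · f = -2αu₁u₂ ∂_u φ` and
`v · f = -2u₁u₂ ∂_v φ`. If `L_α f = 0`, then `A_u = α A_v` and `φ = A_u / (2αu₁u₂)` satisfies
both; its derivatives along the basis `u, v` are `C²`, so `φ` is `C³`. Conversely, `dφ` vanishes
on an open half-plane missing the disc which both rays from `x` eventually enter, so `φ` tends
to the same constant `k` along both rays and `A_u x = 2αu₁u₂ (φ x - k) = α A_v x`.
-/

open Set Filter Topology Metric Pointwise

section Ray

variable {E F : Type*} [NormedAddCommGroup E] [NormedSpace ℝ E] [NormedAddCommGroup F]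

def rayIntegral [NormedSpace ℝ F] (g : E → F) (w x : E) : F := ∫ t in Ioi (0 : ℝ), g (x + t • w)

theorem HasCompactSupport.comp_ray {g : E → F} (hg : HasCompactSupport g) {w : E} (hw : w ≠ 0)
    (x : E) : HasCompactSupport fun t : ℝ => g (x + t • w) :=
  hg.comp_isClosedEmbedding
    ((Homeomorph.addLeft x).isClosedEmbedding.comp (isClosedEmbedding_smul_left hw))

theorem Continuous.integrable_comp_ray {g : E → F} (hg : Continuous g) (hgc : HasCompactSupport g)
    {w : E} (hw : w ≠ 0) (x : E) : Integrable fun t : ℝ => g (x + t • w) :=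
  (hg.comp (by fun_prop)).integrable_of_hasCompactSupport (hgc.comp_ray hw x)

theorem HasCompactSupport.tendsto_comp_ray_atTop {g : E → F} (hg : HasCompactSupport g) {w : E}
    (hw : w ≠ 0) (x : E) : Tendsto (fun t : ℝ => g (x + t • w)) atTop (𝓝 0) :=
  (hg.comp_ray hw x).is_zero_at_infty.mono_left atTop_le_cocompact

theorem integral_Ioi_fderiv_comp_ray [NormedSpace ℝ F] [CompleteSpace F] {φ : E → F}
    (hφ : Differentiable ℝ φ) {w x : E} {k : F}
    (hint : IntegrableOn (fun t : ℝ => fderiv ℝ φ (x + t • w) w) (Ioi 0))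
    (hlim : Tendsto (fun t : ℝ => φ (x + t • w)) atTop (𝓝 k)) :
    ∫ t in Ioi (0 : ℝ), fderiv ℝ φ (x + t • w) w = k - φ x := by
  have hderiv (t : ℝ) :
      HasDerivAt (fun s : ℝ => φ (x + s • w)) (fderiv ℝ φ (x + t • w) w) t := by
    have hline : HasDerivAt (fun s : ℝ => x + s • w) w t := by
      simpa using ((hasDerivAt_id t).smul_const w).const_add x
    exact (hφ _).hasFDerivAt.comp_hasDerivAt t hline
  simpa using integral_Ioi_of_hasDerivAt_of_tendsto' (fun t _ => hderiv t) hint hlim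

theorem hasFDerivAt_rayIntegral [ProperSpace E] [NormedSpace ℝ F] [CompleteSpace F] {g : E → F}
    (hg : ContDiff ℝ 1 g) (hgc : HasCompactSupport g) {w : E} (hw : w ≠ 0) (x₀ : E) :
    HasFDerivAt (rayIntegral g w) (∫ t in Ioi (0 : ℝ), fderiv ℝ g (x₀ + t • w)) x₀ := by
  have hg' : Continuous (fderiv ℝ g) := hg.continuous_fderiv one_ne_zero
  obtain ⟨C, hC⟩ := (hgc.fderiv ℝ).exists_bound_of_continuous hg'
  -- every time at which a ray starting in `closedBall x₀ 1` meets `tsupport g` lies in `S`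
  set S := (fun t : ℝ => t • w) ⁻¹' (tsupport g + closedBall (-x₀) 1)
  have hS : IsCompact S := (isClosedEmbedding_smul_left hw).isCompact_preimage
    (IsCompact.add hgc (isCompact_closedBall (-x₀) 1))
  have hbound : ∀ t, ∀ x ∈ ball x₀ 1, ‖fderiv ℝ g (x + t • w)‖ ≤ S.indicator (fun _ => C) t := by
    intro t x hx
    by_cases ht : x + t • w ∈ tsupport g
    · have hSt : t ∈ S :=
        ⟨x + t • w, ht, -x, by simpa [dist_comm] using ball_subset_closedBall hx, by simp⟩
      rw [indicator_of_mem hSt]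
      exact hC _
    · rw [fderiv_of_notMem_tsupport ℝ ht, norm_zero]
      exact indicator_nonneg (fun _ _ => (norm_nonneg _).trans (hC 0)) t
  refine hasFDerivAt_integral_of_dominated_of_fderiv_le (ball_mem_nhds x₀ one_pos)
    (Eventually.of_forall fun x => (hg.continuous.comp (by fun_prop)).aestronglyMeasurable)
    (hg.continuous.integrable_comp_ray hgc hw x₀).restrict
    (hg'.comp (by fun_prop)).aestronglyMeasurable (Eventually.of_forall fun t => hbound t)
    ((integrable_indicator_iff hS.measurableSet).2
      (integrableOn_const hS.measure_lt_top.ne)).restrict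
    (Eventually.of_forall fun t x _ => ?_)
  exact (hg.differentiable one_ne_zero _).hasFDerivAt.comp x
    ((hasFDerivAt_id x).add_const (t • w))

theorem fderiv_rayIntegral_apply_self [ProperSpace E] [NormedSpace ℝ F] [CompleteSpace F]
    {g : E → F} (hg : ContDiff ℝ 1 g) (hgc : HasCompactSupport g) {w : E} (hw : w ≠ 0) (x : E) :
    fderiv ℝ (rayIntegral g w) x w = -g x := by
  have hint := (hg.continuous_fderiv one_ne_zero).integrable_comp_ray (hgc.fderiv ℝ) hw x
  rw [(hasFDerivAt_rayIntegral hg hgc hw x).fderiv,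
    ContinuousLinearMap.integral_apply hint.restrict,
    integral_Ioi_fderiv_comp_ray (hg.differentiable one_ne_zero)
      (hint.apply_continuousLinearMap w).restrict (hgc.tendsto_comp_ray_atTop hw x), zero_sub]

theorem rayIntegral_eq_smul_sub [NormedSpace ℝ F] [CompleteSpace F] {g : E → F}
    (hg : Continuous g) (hgc : HasCompactSupport g) {φ : E → F} (hφ : Differentiable ℝ φ)
    {w : E} (hw : w ≠ 0) {c : ℝ} (hc : c ≠ 0) (hgφ : ∀ p, g p = c • fderiv ℝ φ p w) {x : E}
    {k : F} (hlim : Tendsto (fun t : ℝ => φ (x + t • w)) atTop (𝓝 k)) :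
    rayIntegral g w x = c • (k - φ x) := by
  have hint : Integrable fun t : ℝ => fderiv ℝ φ (x + t • w) w :=
    ((hg.integrable_comp_ray hgc hw x).smul c⁻¹).congr
      (Eventually.of_forall fun t => by simp [hgφ, hc])
  simp_rw [rayIntegral, hgφ]
  rw [integral_smul, integral_Ioi_fderiv_comp_ray hφ hint.integrableOn hlim]

end Ray

theorem contDiff_succ_of_fderiv_apply_of_span_eq_top {𝕜 E F : Type*} [NontriviallyNormedField 𝕜]
    [CompleteSpace 𝕜] [NormedAddCommGroup E] [NormedSpace 𝕜 E] [FiniteDimensional 𝕜 E]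
    [NormedAddCommGroup F] [NormedSpace 𝕜 F] {s : Set E} (hs : Submodule.span 𝕜 s = ⊤)
    {φ : E → F} {n : ℕ∞} (hφ : Differentiable 𝕜 φ)
    (h : ∀ w ∈ s, ContDiff 𝕜 n fun x => fderiv 𝕜 φ x w) : ContDiff 𝕜 (n + 1) φ := by
  refine contDiff_succ_iff_fderiv_apply.2 ⟨hφ, fun h => by simp at h, fun y => ?_⟩
  have hy : y ∈ Submodule.span 𝕜 s := hs ▸ Submodule.mem_top
  induction hy using Submodule.span_induction with
  | mem w hw => exact h w hw
  | zero => simpa using contDiff_const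
  | add a b _ _ ha hb => simpa using ha.add hb
  | smul c a _ ha => simpa using ha.const_smul c

theorem span_pair_mk_neg_eq_top {u₁ u₂ : ℝ} (hu₁ : u₁ ≠ 0) (hu₂ : u₂ ≠ 0) :
    Submodule.span ℝ {((u₁, u₂) : ℝ × ℝ), (-u₁, u₂)} = ⊤ := by
  refine eq_top_iff.2 fun y _ => Submodule.mem_span_pair.2
    ⟨y.1 / (2 * u₁) + y.2 / (2 * u₂), y.2 / (2 * u₂) - y.1 / (2 * u₁), ?_⟩
  ext <;> simp <;> field_simp <;> ring

theorem ContinuousLinearMap.apply_mk_eq (ℓ : ℝ × ℝ →L[ℝ] ℝ) (a b : ℝ) :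
    ℓ (a, b) = a * ℓ (1, 0) + b * ℓ (0, 1) := by
  have h : ((a, b) : ℝ × ℝ) = a • ((1 : ℝ), (0 : ℝ)) + b • ((0 : ℝ), (1 : ℝ)) := by ext <;> simp
  rw [h, map_add, map_smul, map_smul, smul_eq_mul, smul_eq_mul]

theorem notMem_disc_of_abs_lt_mul {a : ℝ} {p : ℝ × ℝ} (hp : |a| < a * p.2) : p ∉ disc := by
  intro hpd
  have h1 : |a| * 1 < |a| * |p.2| := by
    rw [mul_one, ← abs_mul]; exact hp.trans_le (le_abs_self _)
  have h2 : 1 < |p.2| := lt_of_mul_lt_mul_left h1 (abs_nonneg _)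
  simp only [disc, mem_ofPred_eq] at hpd
  nlinarith [sq_abs p.2, sq_nonneg p.1]

theorem HasCompactSupport.dot_comp {f : ℝ × ℝ → ℝ × ℝ} (hf : HasCompactSupport f) (w : ℝ × ℝ) :
    HasCompactSupport fun p => dot w (f p) :=
  hf.comp_left (g := dot w) (by simp [dot])

section VLine

variable {α u₁ u₂ : ℝ}

theorem eq_pt1_and_eq_pt2_iff (hu₁ : u₁ ≠ 0) (hu₂ : u₂ ≠ 0) (φ : ℝ × ℝ → ℝ) (x y : ℝ × ℝ) :
    (y.1 = pt1 α u₁ u₂ φ x ∧ y.2 = pt2 α u₁ u₂ φ x) ↔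
      (dot (u₁, u₂) y = -(2 * α * u₁ * u₂) * fderiv ℝ φ x (u₁, u₂) ∧
        dot (-u₁, u₂) y = -(2 * u₁ * u₂) * fderiv ℝ φ x (-u₁, u₂)) := by
  rw [ContinuousLinearMap.apply_mk_eq _ u₁, ContinuousLinearMap.apply_mk_eq _ (-u₁)]
  simp only [pt1, pt2, dot]
  constructor
  · rintro ⟨h₁, h₂⟩
    constructor <;> (rw [h₁, h₂]; ring)
  · rintro ⟨h₁, h₂⟩
    constructor
    · refine mul_left_cancel₀ (mul_ne_zero two_ne_zero hu₁) ?_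
      linear_combination h₁ - h₂
    · refine mul_left_cancel₀ (mul_ne_zero two_ne_zero hu₂) ?_
      linear_combination h₁ + h₂

theorem exists_potential_of_Lc_eq_zero (hα : α ≠ 0) (hu₁ : u₁ ≠ 0) (hu₂ : u₂ ≠ 0)
    {f : ℝ × ℝ → ℝ × ℝ} (hf : ContDiff ℝ 2 f) (hcs : HasCompactSupport f)
    (hL : ∀ x, Lc α (u₁, u₂) (-u₁, u₂) f x = 0) :
    ∃ φ : ℝ × ℝ → ℝ, ContDiff ℝ 3 φ ∧ ∀ x,
      dot (u₁, u₂) (f x) = -(2 * α * u₁ * u₂) * fderiv ℝ φ x (u₁, u₂) ∧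
        dot (-u₁, u₂) (f x) = -(2 * u₁ * u₂) * fderiv ℝ φ x (-u₁, u₂) := by
  set u : ℝ × ℝ := (u₁, u₂)
  set v : ℝ × ℝ := (-u₁, u₂)
  have hspan : Submodule.span ℝ {u, v} = ⊤ := span_pair_mk_neg_eq_top hu₁ hu₂
  have hu : u ≠ 0 := by simp [u, hu₁]
  have hv : v ≠ 0 := by simp [v, hu₁]
  have hdot (w : ℝ × ℝ) : ContDiff ℝ 2 (fun p => dot w (f p)) := by unfold dot; fun_prop
  set A := rayIntegral (fun p => dot u (f p)) u
  set B := rayIntegral (fun p => dot v (f p)) v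
  have hA : Differentiable ℝ A := fun x =>
    (hasFDerivAt_rayIntegral ((hdot u).of_le one_le_two) (hcs.dot_comp u) hu x).differentiableAt
  have hB : Differentiable ℝ B := fun x =>
    (hasFDerivAt_rayIntegral ((hdot v).of_le one_le_two) (hcs.dot_comp v) hv x).differentiableAt
  have hAB : A = fun x => α * B x := funext fun x => by
    have h := hL x
    change -A x + α * B x = 0 at h
    linarith
  set c := 2 * α * u₁ * u₂
  have hφu (x) : fderiv ℝ (fun x => c⁻¹ * A x) x u = -c⁻¹ * dot u (f x) := by
    rw [fderiv_const_mul (hA x), smul_apply, smul_eq_mul,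
      fderiv_rayIntegral_apply_self ((hdot u).of_le one_le_two) (hcs.dot_comp u) hu x]
    ring
  have hφv (x) : fderiv ℝ (fun x => c⁻¹ * A x) x v = -(c⁻¹ * α) * dot v (f x) := by
    rw [fderiv_const_mul (hA x), smul_apply, smul_eq_mul, hAB,
      fderiv_const_mul (hB x), smul_apply, smul_eq_mul,
      fderiv_rayIntegral_apply_self ((hdot v).of_le one_le_two) (hcs.dot_comp v) hv x]
    ring
  refine ⟨fun x => c⁻¹ * A x, ?_, fun x => ⟨?_, ?_⟩⟩
  · refine contDiff_succ_of_fderiv_apply_of_span_eq_top (n := 2) hspan (hA.const_mul _) ?_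
    rintro w (rfl | rfl)
    · simp_rw [hφu]; exact contDiff_const.mul (hdot u)
    · simp_rw [hφv]; exact contDiff_const.mul (hdot v)
  · rw [hφu]; simp only [c]; field_simp
  · rw [hφv]; simp only [c]; field_simp

theorem Lc_eq_zero_of_potential (hα : α ≠ 0) (hu₁ : u₁ ≠ 0) (hu₂ : u₂ ≠ 0)
    {f : ℝ × ℝ → ℝ × ℝ} (hf : Continuous f) (hcs : HasCompactSupport f)
    (hsupp : tsupport f ⊆ disc) {φ : ℝ × ℝ → ℝ} (hφ : Differentiable ℝ φ)
    (hφf : ∀ x, dot (u₁, u₂) (f x) = -(2 * α * u₁ * u₂) * fderiv ℝ φ x (u₁, u₂) ∧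
        dot (-u₁, u₂) (f x) = -(2 * u₁ * u₂) * fderiv ℝ φ x (-u₁, u₂)) (x : ℝ × ℝ) :
    Lc α (u₁, u₂) (-u₁, u₂) f x = 0 := by
  set u : ℝ × ℝ := (u₁, u₂)
  set v : ℝ × ℝ := (-u₁, u₂)
  have hspan : Submodule.span ℝ {u, v} = ⊤ := span_pair_mk_neg_eq_top hu₁ hu₂
  set H : Set (ℝ × ℝ) := {p | |u₂| < u₂ * p.2}
  have hH_fderiv : H.EqOn (fderiv ℝ φ) 0 := by
    intro p hp
    have hfp : f p = 0 :=
      image_eq_zero_of_notMem_tsupport fun h => notMem_disc_of_abs_lt_mul hp (hsupp h)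
    obtain ⟨h₁, h₂⟩ := hφf p
    simp only [hfp, dot, Prod.fst_zero, Prod.snd_zero, mul_zero, add_zero] at h₁ h₂
    refine ContinuousLinearMap.ext_on (s := {u, v}) (by simp [hspan]) ?_
    rintro w (rfl | rfl)
    · simpa [hα, hu₁, hu₂] using h₁.symm
    · simpa [hu₁, hu₂] using h₂.symm
  have hH_open : IsOpen H := isOpen_lt continuous_const (by fun_prop)
  have hH_conv : Convex ℝ H := convex_halfSpace_gt
    ⟨fun a b => by rw [Prod.snd_add, mul_add],
      fun a b => by rw [Prod.smul_snd, smul_eq_mul, smul_eq_mul]; ring⟩ _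
  have hray : ∀ᶠ t : ℝ in atTop, x + t • u ∈ H ∧ x + t • v ∈ H := by
    have : Tendsto (fun t : ℝ => u₂ * x.2 + t * u₂ ^ 2) atTop atTop :=
      tendsto_atTop_add_const_left _ _ (tendsto_id.atTop_mul_const (by positivity))
    filter_upwards [this.eventually_gt_atTop |u₂|] with t ht
    simp only [H, u, v, mem_ofPred_eq, Prod.snd_add, Prod.smul_snd, smul_eq_mul]
    constructor <;> linarith
  obtain ⟨T, hTu, -⟩ := hray.exists
  have hlim (w : ℝ × ℝ) (hwH : ∀ᶠ t : ℝ in atTop, x + t • w ∈ H) :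
      Tendsto (fun t : ℝ => φ (x + t • w)) atTop (𝓝 (φ (x + T • u))) :=
    tendsto_const_nhds.congr' (hwH.mono fun t ht =>
      hH_open.is_const_of_fderiv_eq_zero hH_conv.isPreconnected hφ.differentiableOn
        hH_fderiv hTu ht)
  have hdot (w : ℝ × ℝ) : Continuous (fun p => dot w (f p)) := by unfold dot; fun_prop
  change -rayIntegral (fun p => dot u (f p)) u x + α * rayIntegral (fun p => dot v (f p)) v x = 0
  rw [rayIntegral_eq_smul_sub (hdot u) (hcs.dot_comp u) hφ (by simp [u, hu₁])
      (by simp [hα, hu₁, hu₂]) (fun p => (hφf p).1) (hlim u (hray.mono fun _ h => h.1)),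
    rayIntegral_eq_smul_sub (hdot v) (hcs.dot_comp v) hφ (by simp [v, hu₁])
      (by simp [hu₁, hu₂]) (fun p => (hφf p).2) (hlim v (hray.mono fun _ h => h.2)),
    smul_eq_mul, smul_eq_mul]
  ring

end VLine

theorem stmt15_general (α : ℝ) (hα : α ≠ 0) (u₁ u₂ : ℝ)
    (hne : u₁ * u₂ ≠ 0)
    (f : ℝ × ℝ → ℝ × ℝ) (hf : ContDiff ℝ 2 f)
    (hcs : HasCompactSupport f) (hsupp : tsupport f ⊆ disc) :
    (∀ x, Lc α (u₁, u₂) (-u₁, u₂) f x = 0) ↔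
      ∃ φ : ℝ × ℝ → ℝ, ContDiff ℝ 3 φ ∧
        (∀ x, (f x).1 = pt1 α u₁ u₂ φ x) ∧ (∀ x, (f x).2 = pt2 α u₁ u₂ φ x) := by
  obtain ⟨hu₁, hu₂⟩ := mul_ne_zero_iff.1 hne
  simp_rw [← forall_and, eq_pt1_and_eq_pt2_iff hu₁ hu₂]
  refine ⟨exists_potential_of_Lc_eq_zero hα hu₁ hu₂ hf hcs, ?_⟩
  rintro ⟨φ, hφ, hφf⟩
  exact Lc_eq_zero_of_potential hα hu₁ hu₂ hf.continuous hcs hsupp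
    (hφ.differentiable (by norm_num)) hφf

theorem stmt15 (α : ℝ) (hα : α ≠ 0) (u₁ u₂ : ℝ)
    (hunit : u₁ ^ 2 + u₂ ^ 2 = 1) (hne : u₁ * u₂ ≠ 0)
    (f : ℝ × ℝ → ℝ × ℝ) (hf : ContDiff ℝ 2 f)
    (hcs : HasCompactSupport f) (hsupp : tsupport f ⊆ disc) :
    (∀ x, Lc α (u₁, u₂) (-u₁, u₂) f x = 0) ↔
      ∃ φ : ℝ × ℝ → ℝ, ContDiff ℝ 3 φ ∧
        (∀ x, (f x).1 = pt1 α u₁ u₂ φ x) ∧ (∀ x, (f x).2 = pt2 α u₁ u₂ φ x) :=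
  stmt15_general α hα u₁ u₂ hne f hf hcs hsupp
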